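/- There is a bound P such that for every prime number p > P, setting c = 1/4 − 1/p², the map f_c(z) = z² + c has exactly 4 rational preperiodic points, namely 1/2 + 1/p, 1/2 − 1/p, −1/2 + 1/p, −1/2 − 1/p; moreover 1/2 + 1/p and 1/2 − 1/p are fixed points of f_c. -/

import Mathlib

/-- The quadratic map `f_c(z) = z² + c`. -/
def fc (c : ℚ) : ℚ → ℚ := fun z => z ^ 2 + c

/-- `x` is preperiodic for `f_c`: its forward orbit is eventually periodic. -/
def IsPreper (c x : ℚ) : Prop := ∃ m n : ℕ, m < n ∧ (fc c)^[m] x = (fc c)^[n] x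

/-! Write `c = 1/4 - 1/p² = (p² - 4)/(2p)²`. For `c = m/n²` one has
`n f_c(x) = ((n x)² + m)/n`, so if `n x` is not an integer its denominator gets squared at each
step and the orbit cannot be finite: preperiodic points lie in `(1/2p) ℤ`. They also lie in
`[-β, β]` for the fixed point `β = 1/2 + 1/p`, beyond which `|x|` increases along the orbit.
For preperiodic `x = r/(2p)` the image `f_c(x)` is preperiodic too, so `2p ∣ r² + p² - 4`:
hence `r` is odd and `r ≡ ±2 (mod p)`, and `|r| ≤ p + 2` leaves only `r = ±p ± 2`. -/

theorem Function.iterate_ne_iterate_of_escape {α β : Type*} [Preorder β] {f : α → α}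
    (φ : α → β) {S : Set α} (hS : Set.MapsTo f S S) (hφ : ∀ a ∈ S, φ a < φ (f a))
    {x : α} (hx : x ∈ S) {m n : ℕ} (hmn : m < n) : f^[m] x ≠ f^[n] x := by
  have hmono : StrictMono fun k => φ (f^[k] x) := strictMono_nat_of_lt_succ fun k => by
    simpa only [Function.iterate_succ_apply'] using hφ _ (hS.iterate k hx)
  exact fun h => (hmono hmn).ne (congrArg φ h)

theorem Rat.den_dvd_den_div_intCast (q : ℚ) {d : ℤ} (hd : d ≠ 0) : q.den ∣ (q / d).den := by
  simpa [div_mul_cancel₀ q (Int.cast_ne_zero.mpr hd)] using Rat.mul_den_dvd (q / d) d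

theorem not_isPreper_of_escape {β : Type*} [Preorder β] {c x : ℚ} (φ : ℚ → β) {S : Set ℚ}
    (hS : Set.MapsTo (fc c) S S) (hφ : ∀ a ∈ S, φ a < φ (fc c a)) (hx : x ∈ S) :
    ¬ IsPreper c x := fun ⟨_, _, hmn, h⟩ =>
  Function.iterate_ne_iterate_of_escape φ hS hφ hx hmn h

namespace IsPreper

variable {c x : ℚ}

theorem fc_apply (h : IsPreper c x) : IsPreper c (fc c x) := by
  obtain ⟨m, n, hmn, h⟩ := h
  refine ⟨m, n, hmn, ?_⟩
  rw [← Function.Commute.self_iterate (fc c) m x, h, Function.Commute.self_iterate (fc c) n x]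

theorem of_fc_apply (h : IsPreper c (fc c x)) : IsPreper c x := by
  obtain ⟨m, n, hmn, h⟩ := h
  exact ⟨m + 1, n + 1, Nat.succ_lt_succ hmn, h⟩

theorem of_isFixedPt (h : Function.IsFixedPt (fc c) x) : IsPreper c x :=
  ⟨0, 1, zero_lt_one, h.symm⟩

theorem abs_le {β : ℚ} (hβ : fc c β = β) (hβ_gt : 1 / 2 < β) (hx : IsPreper c x) :
    |x| ≤ β := by
  have hc : c = β - β ^ 2 := by simp only [fc] at hβ; linarith
  have hout : ∀ y, β < |y| → |y| < fc c y := fun y hy => by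
    have : y ^ 2 = |y| ^ 2 := (sq_abs y).symm
    simp only [fc, hc]
    nlinarith
  by_contra! hβx
  refine not_isPreper_of_escape abs (S := {y | β < |y|}) (fun y hy => ?_) (fun y hy => ?_)
    hβx hx
  · exact hy.trans ((hout y hy).trans_le (le_abs_self _))
  · exact (hout y hy).trans_le (le_abs_self _)

theorem den_mul_eq_one {m n : ℤ} (hn : n ≠ 0) (hx : IsPreper (m / n ^ 2) x) :
    ((n : ℚ) * x).den = 1 := by
  have hconj : ∀ y, (n : ℚ) * fc (m / n ^ 2) y = (((n : ℚ) * y) ^ 2 + m) / n := by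
    intro y
    simp only [fc]
    field_simp
  have hgrow : ∀ y, 1 < ((n : ℚ) * y).den →
      ((n : ℚ) * y).den < ((n : ℚ) * fc (m / n ^ 2) y).den := fun y hy => by
    have hdvd : ((n : ℚ) * y).den ^ 2 ∣ ((n : ℚ) * fc (m / n ^ 2) y).den := by
      rw [hconj, ← Rat.den_pow, ← Rat.add_intCast_den _ m]
      exact Rat.den_dvd_den_div_intCast _ hn
    calc ((n : ℚ) * y).den < ((n : ℚ) * y).den ^ 2 := lt_self_pow₀ hy one_lt_two
      _ ≤ _ := Nat.le_of_dvd (Rat.den_pos _) hdvd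
  by_contra! hden
  exact not_isPreper_of_escape _ (S := {y | 1 < ((n : ℚ) * y).den})
    (fun y hy => hy.trans (hgrow y hy)) hgrow (Nat.lt_of_le_of_ne (Rat.den_pos _) hden.symm) hx

end IsPreper

section QuarterFamily

variable (t : ℚ)

theorem fc_half_add : fc (1 / 4 - t ^ 2) (1 / 2 + t) = 1 / 2 + t := by
  simp only [fc]; ring

theorem fc_half_sub : fc (1 / 4 - t ^ 2) (1 / 2 - t) = 1 / 2 - t := by
  simp only [fc]; ring

theorem fc_neg_half_add : fc (1 / 4 - t ^ 2) (-(1 / 2) + t) = 1 / 2 - t := by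
  simp only [fc]; ring

theorem fc_neg_half_sub : fc (1 / 4 - t ^ 2) (-(1 / 2) - t) = 1 / 2 + t := by
  simp only [fc]; ring

end QuarterFamily

theorem eq_of_dvd_sub_two {p r : ℤ} (hp : 3 ≤ p) (hr_odd : Odd r)
    (hdvd : p ∣ r - 2) (hr : |r| ≤ p + 2) : r = p + 2 ∨ r = 2 - p := by
  obtain ⟨k, hk⟩ := hdvd
  have hk_odd : Odd k := (Int.odd_mul.mp (hk ▸ hr_odd.sub_even even_two)).2
  obtain ⟨hr₁, hr₂⟩ := abs_le.mp hr
  have hk_lt : k < 3 := by nlinarith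
  have hk_gt : -3 < k := by nlinarith
  have hk_cases : k = 1 ∨ k = -1 := by rw [Int.odd_iff] at hk_odd; omega
  rcases hk_cases with rfl | rfl
  · left; linarith
  · right; linarith

theorem eq_of_two_mul_dvd_sq_add_sq_sub_four {p : ℕ} (hp : p.Prime) (hp2 : p ≠ 2) {r : ℤ}
    (hdvd : 2 * (p : ℤ) ∣ r ^ 2 + p ^ 2 - 4) (hr : |r| ≤ p + 2) :
    r = p + 2 ∨ r = p - 2 ∨ r = 2 - p ∨ r = -p - 2 := by
  have hp_odd : Odd (p : ℤ) := by exact_mod_cast hp.odd_of_ne_two hp2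
  have hp3 : (3 : ℤ) ≤ p := by have := hp.two_le; omega
  have hr_odd : Odd r := by
    by_contra hr_not_odd
    have hr_even : Even r := Int.not_odd_iff_even.mp hr_not_odd
    have hodd : Odd (r ^ 2 + p ^ 2 - 4) :=
      ((Int.even_pow.mpr ⟨hr_even, two_ne_zero⟩).add_odd hp_odd.pow).sub_even
        (by decide)
    exact Int.not_even_iff_odd.mpr hodd (even_iff_two_dvd.mpr ((dvd_mul_right 2 _).trans hdvd))
  have hp_dvd : (p : ℤ) ∣ (r - 2) * (r + 2) := by
    have e : (r - 2) * (r + 2) = (r ^ 2 + p ^ 2 - 4) - p ^ 2 := by ring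
    rw [e]
    exact ((dvd_mul_left _ 2).trans hdvd).sub (dvd_pow_self _ two_ne_zero)
  rcases (Nat.prime_iff_prime_int.mp hp).dvd_mul.mp hp_dvd with h | h
  · rcases eq_of_dvd_sub_two hp3 hr_odd h hr with h | h <;> omega
  · have h' : (p : ℤ) ∣ -r - 2 := by
      have e : -r - 2 = -(r + 2) := by ring
      rw [e]; exact h.neg_right
    rcases eq_of_dvd_sub_two hp3 hr_odd.neg h' (by rwa [abs_neg]) with h | h <;> omega

theorem eq_of_isPreper {p : ℕ} (hp : p.Prime) (hp2 : p ≠ 2) {x : ℚ}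
    (hx : IsPreper (1 / 4 - (1 / (p : ℚ)) ^ 2) x) :
    x = 1 / 2 + 1 / p ∨ x = 1 / 2 - 1 / p ∨ x = -(1 / 2) + 1 / p ∨ x = -(1 / 2) - 1 / p := by
  have hp_pos : (0 : ℚ) < p := by exact_mod_cast hp.pos
  have hp0 := hp_pos.ne'
  have hn : (2 * p : ℤ) ≠ 0 := by have := hp.ne_zero; omega
  have hc : 1 / 4 - (1 / (p : ℚ)) ^ 2 = ((p ^ 2 - 4 : ℤ) : ℚ) / ((2 * p : ℤ) : ℚ) ^ 2 := by
    push_cast; field_simp; ring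
  have hint : ∀ y, IsPreper (1 / 4 - (1 / (p : ℚ)) ^ 2) y → ∃ r : ℤ, 2 * (p : ℚ) * y = r := by
    intro y hy
    rw [hc] at hy
    have hden := hy.den_mul_eq_one hn
    push_cast at hden
    exact ⟨_, (Rat.coe_int_num_of_den_eq_one hden).symm⟩
  obtain ⟨r, hr⟩ := hint x hx
  obtain ⟨s, hs⟩ := hint _ hx.fc_apply
  have hbound := hx.abs_le (fc_half_add _) (lt_add_of_pos_right _ (one_div_pos.mpr hp_pos))
  have hr_bound : |r| ≤ p + 2 := by
    have : |(r : ℚ)| ≤ p + 2 := by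
      rw [← hr, abs_mul, abs_of_pos (by positivity)]
      calc 2 * (p : ℚ) * |x| ≤ 2 * p * (1 / 2 + 1 / p) := by gcongr
        _ = p + 2 := by field_simp
    exact_mod_cast this
  have hdvd : 2 * (p : ℤ) ∣ r ^ 2 + p ^ 2 - 4 := ⟨s, by
    have : (r : ℚ) ^ 2 + p ^ 2 - 4 = 2 * p * s := by
      rw [← hs, ← hr]; simp only [fc]; field_simp; ring
    exact_mod_cast this⟩
  have hx_eq : x = r / (2 * p) := by rw [← hr]; field_simp
  rw [hx_eq]
  rcases eq_of_two_mul_dvd_sq_add_sq_sub_four hp hp2 hdvd hr_bound with h | h | h | h <;>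
    rw [h] <;> push_cast
  · left; field_simp
  · right; left; field_simp
  · right; right; left; field_simp; ring
  · right; right; right; field_simp

theorem setOf_isPreper_eq {p : ℕ} (hp : p.Prime) (hp2 : p ≠ 2) :
    {x : ℚ | IsPreper (1 / 4 - (1 / (p : ℚ)) ^ 2) x} =
      {1 / 2 + 1 / (p : ℚ), 1 / 2 - 1 / (p : ℚ),
        -(1 / 2) + 1 / (p : ℚ), -(1 / 2) - 1 / (p : ℚ)} := by
  ext x
  constructor
  · exact eq_of_isPreper hp hp2
  · rintro (rfl | rfl | rfl | rfl)
    · exact .of_isFixedPt (fc_half_add _)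
    · exact .of_isFixedPt (fc_half_sub _)
    · exact .of_fc_apply (fc_neg_half_add _ ▸ .of_isFixedPt (fc_half_sub _))
    · exact .of_fc_apply (fc_neg_half_sub _ ▸ .of_isFixedPt (fc_half_add _))

theorem ncard_half_add_sub {t : ℚ} (ht₀ : 0 < t) (ht : t < 1 / 2) :
    ({1 / 2 + t, 1 / 2 - t, -(1 / 2) + t, -(1 / 2) - t} : Set ℚ).ncard = 4 :=
  Set.ncard_eq_four.mpr ⟨_, _, _, _, by linarith, by linarith, by linarith, by linarith,
    by linarith, by linarith, rfl⟩

/-- For all sufficiently large primes `p` and `c = 1/4 - 1/p²`, the map `f_c` has exactly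
the four rational preperiodic points `±1/2 ± 1/p`, and `1/2 ± 1/p` are fixed. -/
theorem graph_4_1_1_family :
    ∃ P : ℕ, ∀ p : ℕ, p.Prime → P < p →
      letI c : ℚ := 1 / 4 - 1 / (p : ℚ) ^ 2
      {x : ℚ | IsPreper c x} =
        {1 / 2 + 1 / (p : ℚ), 1 / 2 - 1 / (p : ℚ),
          -(1 / 2) + 1 / (p : ℚ), -(1 / 2) - 1 / (p : ℚ)} ∧
      {x : ℚ | IsPreper c x}.ncard = 4 ∧
      fc c (1 / 2 + 1 / (p : ℚ)) = 1 / 2 + 1 / (p : ℚ) ∧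
      fc c (1 / 2 - 1 / (p : ℚ)) = 1 / 2 - 1 / (p : ℚ) := by
  refine ⟨2, fun p hp hp2 => ?_⟩
  have hp_gt : (2 : ℚ) < p := by exact_mod_cast hp2
  have hinv : 1 / (p : ℚ) < 1 / 2 := one_div_lt_one_div_of_lt two_pos hp_gt
  have hset := setOf_isPreper_eq hp hp2.ne'
  rw [← one_div_pow]
  exact ⟨hset, hset ▸ ncard_half_add_sub (by positivity) hinv, fc_half_add _, fc_half_sub _⟩
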